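/- Let e₁, e₂, e₃ be nonnegative constants and C > 0. Suppose a smooth axially symmetric function f on ℝ³ satisfies ∫_{ℝ³} ( r^{e₁}|f(r,z)|² + r^{e₂}|∇f(r,z)|² + r^{e₃}|∂_z ∇f(r,z)|² ) dx ≤ C, where r = √(x₁²+x₂²) and z = x₃. Then there is a constant C' , depending only on C, e₁, e₂, e₃, such that for every r > 0: (i) ∫_{−∞}^{∞} |f(r,z)|² dz ≤ C' r^{−(e₁+e₂)/2 − 1}; (ii) ∫_{−∞}^{∞} |∂_z f(r,z)|² dz ≤ C' r^{−(e₃+e₂)/2 − 1}; (iii) |f(r,z)|² ≤ C' r^{−(e₁+2e₂+e₃)/4 − 1} for all z ∈ ℝ. -/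

import Mathlib

open MeasureTheory Real Set

noncomputable section

/-- Partial derivative `∂_r` for a function of `(r, z)`. -/
def pr (F : ℝ → ℝ → ℝ) : ℝ → ℝ → ℝ := fun r z => deriv (fun s => F s z) r

/-- Partial derivative `∂_z` for a function of `(r, z)`. -/
def pz (F : ℝ → ℝ → ℝ) : ℝ → ℝ → ℝ := fun r z => deriv (fun s => F r s) z

/-!
Write `A(s) = ∫ f(s,z)² dz` and `α = (e₁+e₂)/2 + 1`. For `r < b`, the fundamental theorem of
calculus in `s` gives `A(r) ≤ A(b) + ∫_{s>r} ∫ 2|f| |∂_r f| dz ds`, and for `s ≥ r` AM-GM gives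
`2 r^α |f| |∂_r f| ≤ s^{e₁+1} f² + s^{e₂+1} (∂_r f)²`, so the last integral is at most `r^{-α}`
times the energy. Finiteness of `∫ s^{e₁+1} A(s) ds` makes `A(b)` arbitrarily small for suitable
large `b`; this is (i), and (ii) is (i) applied to `∂_z f`, using `∂_r ∂_z f = ∂_z ∂_r f`.
The same argument in `z` gives `f(r,z)² ≤ 2 ‖f(r,·)‖₂ ‖∂_z f(r,·)‖₂`, which with (i) and (ii)
is (iii).
-/

open scoped ENNReal
open ENNReal (ofReal ofReal_ne_top)

theorem two_mul_mul_abs_mul_abs_le {m P Q : ℝ} (hP : 0 ≤ P) (hQ : 0 ≤ Q) (h : m ^ 2 ≤ P * Q)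
    (x y : ℝ) : 2 * m * |x| * |y| ≤ P * x ^ 2 + Q * y ^ 2 := by
  have hm : m ≤ √P * √Q := by rw [← Real.sqrt_mul hP]; exact Real.le_sqrt_of_sq_le h
  have hamgm := two_mul_le_add_sq (√P * |x|) (√Q * |y|)
  rw [mul_pow, mul_pow, Real.sq_sqrt hP, Real.sq_sqrt hQ, sq_abs, sq_abs] at hamgm
  nlinarith [mul_le_mul_of_nonneg_right hm (mul_nonneg (abs_nonneg x) (abs_nonneg y))]

theorem rpow_sq_le_mul_rpow_mul {r s ea eb : ℝ} (hr : 0 < r) (hrs : r ≤ s) (hea : -1 ≤ ea)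
    (heb : -1 ≤ eb) : (r ^ ((ea + eb) / 2 + 1)) ^ 2 ≤ s ^ ea * s * (s ^ eb * s) := by
  have hs : 0 < s := hr.trans_le hrs
  calc (r ^ ((ea + eb) / 2 + 1)) ^ 2 = r ^ (ea + 1) * r ^ (eb + 1) := by
        rw [← Real.rpow_natCast, ← Real.rpow_mul hr.le, ← Real.rpow_add hr]
        ring_nf
    _ ≤ s ^ (ea + 1) * s ^ (eb + 1) := by
        gcongr <;> linarith
    _ = s ^ ea * s * (s ^ eb * s) := by
        rw [Real.rpow_add_one hs.ne', Real.rpow_add_one hs.ne']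

theorem sqrt_mul_rpow_mul_mul_rpow {K r : ℝ} (hK : 0 ≤ K) (hr : 0 < r) (a b : ℝ) :
    √(K * r ^ a * (K * r ^ b)) = K * r ^ ((a + b) / 2) := by
  have h : r ^ a * r ^ b = r ^ ((a + b) / 2) * r ^ ((a + b) / 2) := by
    rw [← Real.rpow_add hr, ← Real.rpow_add hr]
    ring_nf
  rw [← Real.sqrt_mul_self (by positivity : 0 ≤ K * r ^ ((a + b) / 2))]
  congr 1
  linear_combination K ^ 2 * h

theorem setLIntegral_ofReal_mul_le_div {α : Type*} [MeasurableSpace α] {μ : Measure α}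
    {s : Set α} (hs : MeasurableSet s) {F G w : α → ℝ} {c C : ℝ} (hc : 0 < c)
    (hw : ∀ x ∈ s, 0 ≤ w x) (hFG : ∀ x ∈ s, F x ≤ G x)
    (hG : ∫⁻ x in s, ofReal (G x * (c * w x)) ∂μ ≤ ofReal C) :
    ∫⁻ x in s, ofReal (F x * w x) ∂μ ≤ ofReal (C / c) := by
  rw [ENNReal.ofReal_div_of_pos hc, ENNReal.le_div_iff_mul_le (Or.inl (by simpa using hc))
    (Or.inl ofReal_ne_top), mul_comm, ← lintegral_const_mul' _ _ ofReal_ne_top]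
  refine le_trans (setLIntegral_mono' hs fun x hx => ?_) hG
  rw [← ENNReal.ofReal_mul hc.le]
  refine ENNReal.ofReal_le_ofReal ?_
  nlinarith [mul_le_mul_of_nonneg_right (hFG x hx) (mul_nonneg hc.le (hw x hx))]

theorem lintegral_two_mul_abs_mul_abs_le {α : Type*} [MeasurableSpace α] {μ : Measure α}
    {f g : α → ℝ} (hf : Measurable f) {a b : ℝ} (ha : 0 < a) (hb : 0 < b)
    (hfa : ∫⁻ x, ofReal (f x ^ 2) ∂μ ≤ ofReal a) (hgb : ∫⁻ x, ofReal (g x ^ 2) ∂μ ≤ ofReal b) :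
    ∫⁻ x, ofReal (2 * |f x| * |g x|) ∂μ ≤ ofReal (2 * √(a * b)) := by
  -- AM-GM with the weight `c` that balances the two terms: `c * a = b / c = √(a * b)`.
  set c := √b / √a
  have hc : 0 < c := by positivity
  have hpt (x : α) : 2 * |f x| * |g x| ≤ c * f x ^ 2 + c⁻¹ * g x ^ 2 := by
    simpa using two_mul_mul_abs_mul_abs_le (m := 1) hc.le (inv_nonneg.2 hc.le)
      (by rw [mul_inv_cancel₀ hc.ne']; norm_num) (f x) (g x)
  calc ∫⁻ x, ofReal (2 * |f x| * |g x|) ∂μ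
      ≤ ∫⁻ x, ofReal c * ofReal (f x ^ 2) + ofReal c⁻¹ * ofReal (g x ^ 2) ∂μ := by
        refine lintegral_mono fun x => ?_
        rw [← ENNReal.ofReal_mul hc.le, ← ENNReal.ofReal_mul (by positivity),
          ← ENNReal.ofReal_add (by positivity) (by positivity)]
        exact ENNReal.ofReal_le_ofReal (hpt x)
    _ = ofReal c * ∫⁻ x, ofReal (f x ^ 2) ∂μ + ofReal c⁻¹ * ∫⁻ x, ofReal (g x ^ 2) ∂μ := by
        rw [lintegral_add_left (by fun_prop), lintegral_const_mul' _ _ ofReal_ne_top,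
          lintegral_const_mul' _ _ ofReal_ne_top]
    _ ≤ ofReal c * ofReal a + ofReal c⁻¹ * ofReal b := by gcongr
    _ = ofReal (2 * √(a * b)) := by
        rw [← ENNReal.ofReal_mul hc.le, ← ENNReal.ofReal_mul (by positivity),
          ← ENNReal.ofReal_add (by positivity) (by positivity)]
        congr 1
        have ha' : 0 < √a := Real.sqrt_pos.2 ha
        simp only [c]
        rw [Real.sqrt_mul ha.le, inv_div]
        field_simp
        rw [Real.sq_sqrt ha.le, Real.sq_sqrt hb.le]
        ring

theorem sq_le_sq_add_lintegral {u u' : ℝ → ℝ} (hu : ∀ t, HasDerivAt u (u' t) t)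
    (hu' : Continuous u') {a b : ℝ} (hab : a ≤ b) :
    ofReal (u a ^ 2) ≤ ofReal (u b ^ 2) + ∫⁻ t in Ioc a b, ofReal (2 * |u t| * |u' t|) := by
  have hcont : Continuous u := continuous_iff_continuousAt.2 fun t => (hu t).continuousAt
  have hderiv (t : ℝ) : HasDerivAt (fun t => u t ^ 2) (2 * u t * u' t) t := by
    simpa [mul_comm, mul_assoc, mul_left_comm] using (hu t).fun_pow 2
  have hftc : ∫ t in a..b, -(2 * u t * u' t) = u a ^ 2 - u b ^ 2 := by
    rw [intervalIntegral.integral_neg, intervalIntegral.integral_eq_sub_of_hasDerivAt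
      (fun t _ => hderiv t)
      ((by fun_prop : Continuous fun t => 2 * u t * u' t).intervalIntegrable a b)]
    ring
  have hle : u a ^ 2 - u b ^ 2 ≤ ∫ t in Ioc a b, 2 * |u t| * |u' t| := by
    rw [← hftc, ← intervalIntegral.integral_of_le hab]
    refine intervalIntegral.integral_mono_on hab
      ((by fun_prop : Continuous fun t => -(2 * u t * u' t)).intervalIntegrable a b)
      ((by fun_prop : Continuous fun t => 2 * |u t| * |u' t|).intervalIntegrable a b)
      fun t _ => ?_
    have := neg_abs_le (u t * u' t)
    rw [abs_mul] at this
    linarith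
  rw [← ofReal_integral_eq_lintegral_ofReal (f := fun t => 2 * |u t| * |u' t|)
    ((continuous_const.mul hcont.abs).mul hu'.abs).integrableOn_Ioc
    (ae_of_all _ fun t => by positivity)]
  exact (ENNReal.ofReal_le_ofReal (by linarith)).trans ENNReal.ofReal_add_le

theorem exists_gt_le_of_setLIntegral_Ioi_ne_top {A : ℝ → ℝ≥0∞} {T : ℝ}
    (h : ∫⁻ s in Ioi T, A s ≠ ∞) {ε : ℝ≥0∞} (hε : ε ≠ 0) : ∃ b, T < b ∧ A b ≤ ε := by
  by_contra! hA
  refine h (eq_top_iff.2 ?_)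
  calc ∞ = ∫⁻ _ in Ioi T, ε := by rw [setLIntegral_const, Real.volume_Ioi, ENNReal.mul_top hε]
    _ ≤ ∫⁻ s in Ioi T, A s := setLIntegral_mono' measurableSet_Ioi fun s hs => (hA s hs).le

theorem sq_le_two_sqrt_mul_of_lintegral_sq_le {u u' : ℝ → ℝ} (hu : ∀ t, HasDerivAt u (u' t) t)
    (hu' : Continuous u') {a b : ℝ} (ha : 0 < a) (hb : 0 < b)
    (hua : ∫⁻ t, ofReal (u t ^ 2) ≤ ofReal a) (hub : ∫⁻ t, ofReal (u' t ^ 2) ≤ ofReal b)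
    (x : ℝ) : u x ^ 2 ≤ 2 * √(a * b) := by
  have hcont : Continuous u := continuous_iff_continuousAt.2 fun t => (hu t).continuousAt
  refine le_of_forall_pos_le_add fun ε hε => ?_
  obtain ⟨y, hxy, hy⟩ := exists_gt_le_of_setLIntegral_Ioi_ne_top (T := x)
    (ne_top_of_le_ne_top ofReal_ne_top ((setLIntegral_le_lintegral _ _).trans hua))
    (ENNReal.ofReal_pos.2 hε).ne'
  have key := (sq_le_sq_add_lintegral hu hu' hxy.le).trans (add_le_add hy
    ((setLIntegral_le_lintegral _ _).trans
      (lintegral_two_mul_abs_mul_abs_le hcont.measurable ha hb hua hub)))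
  rw [← ENNReal.ofReal_add hε.le (by positivity),
    ENNReal.ofReal_le_ofReal_iff (by positivity)] at key
  linarith

section PartialDerivatives

variable {g : ℝ → ℝ → ℝ}

theorem hasDerivAt_pr_fderiv (hg : Differentiable ℝ (fun w : ℝ × ℝ => g w.1 w.2)) (r z : ℝ) :
    HasDerivAt (fun s => g s z) (fderiv ℝ (fun w : ℝ × ℝ => g w.1 w.2) (r, z) (1, 0)) r :=
  (hg (r, z)).hasFDerivAt.comp_hasDerivAt (f := fun s => (s, z)) r
    ((hasDerivAt_id r).prodMk (hasDerivAt_const r z))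

theorem hasDerivAt_pz_fderiv (hg : Differentiable ℝ (fun w : ℝ × ℝ => g w.1 w.2)) (r z : ℝ) :
    HasDerivAt (fun s => g r s) (fderiv ℝ (fun w : ℝ × ℝ => g w.1 w.2) (r, z) (0, 1)) z :=
  (hg (r, z)).hasFDerivAt.comp_hasDerivAt (f := fun s => (r, s)) z
    ((hasDerivAt_const z r).prodMk (hasDerivAt_id z))

theorem pr_eq_fderiv (hg : Differentiable ℝ (fun w : ℝ × ℝ => g w.1 w.2)) :
    (fun w : ℝ × ℝ => pr g w.1 w.2) = fun w => fderiv ℝ (fun w : ℝ × ℝ => g w.1 w.2) w (1, 0) :=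
  funext fun w => (hasDerivAt_pr_fderiv hg w.1 w.2).deriv

theorem pz_eq_fderiv (hg : Differentiable ℝ (fun w : ℝ × ℝ => g w.1 w.2)) :
    (fun w : ℝ × ℝ => pz g w.1 w.2) = fun w => fderiv ℝ (fun w : ℝ × ℝ => g w.1 w.2) w (0, 1) :=
  funext fun w => (hasDerivAt_pz_fderiv hg w.1 w.2).deriv

theorem hasDerivAt_pr (hg : Differentiable ℝ (fun w : ℝ × ℝ => g w.1 w.2)) (r z : ℝ) :
    HasDerivAt (fun s => g s z) (pr g r z) r :=
  (hasDerivAt_pr_fderiv hg r z).differentiableAt.hasDerivAt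

theorem hasDerivAt_pz (hg : Differentiable ℝ (fun w : ℝ × ℝ => g w.1 w.2)) (r z : ℝ) :
    HasDerivAt (fun s => g r s) (pz g r z) z :=
  (hasDerivAt_pz_fderiv hg r z).differentiableAt.hasDerivAt

theorem contDiff_pr {n : WithTop ℕ∞} (hg : ContDiff ℝ (n + 1) (fun w : ℝ × ℝ => g w.1 w.2)) :
    ContDiff ℝ n (fun w : ℝ × ℝ => pr g w.1 w.2) := by
  rw [pr_eq_fderiv (hg.differentiable (by simp))]
  exact (hg.fderiv_right le_rfl).clm_apply contDiff_const

theorem contDiff_pz {n : WithTop ℕ∞} (hg : ContDiff ℝ (n + 1) (fun w : ℝ × ℝ => g w.1 w.2)) :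
    ContDiff ℝ n (fun w : ℝ × ℝ => pz g w.1 w.2) := by
  rw [pz_eq_fderiv (hg.differentiable (by simp))]
  exact (hg.fderiv_right le_rfl).clm_apply contDiff_const

theorem pr_pz_eq_pz_pr (hg : ContDiff ℝ 2 (fun w : ℝ × ℝ => g w.1 w.2)) :
    pr (pz g) = pz (pr g) := by
  ext r z
  -- Both mixed partials are entries of the symmetric bilinear map `D²G (r, z)`.
  set G := fun w : ℝ × ℝ => g w.1 w.2
  have hG : Differentiable ℝ G := hg.differentiable two_ne_zero
  have hG' : Differentiable ℝ (fderiv ℝ G) :=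
    (hg.fderiv_right (m := 1) le_rfl).differentiable one_ne_zero
  have hsecond : ∀ v w, fderiv ℝ (fun x => fderiv ℝ G x v) (r, z) w
      = fderiv ℝ (fderiv ℝ G) (r, z) w v := fun v w => by
    rw [fderiv_clm_apply (hG' _) (differentiableAt_const v)]
    simp
  have hsymm := (hg.contDiffAt (x := (r, z))).isSymmSndFDerivAt (by simp)
  have hpz : Differentiable ℝ (fun w : ℝ × ℝ => pz g w.1 w.2) :=
    (contDiff_pz (n := 1) hg).differentiable one_ne_zero
  have hpr : Differentiable ℝ (fun w : ℝ × ℝ => pr g w.1 w.2) :=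
    (contDiff_pr (n := 1) hg).differentiable one_ne_zero
  calc pr (pz g) r z = fderiv ℝ (fun w : ℝ × ℝ => pz g w.1 w.2) (r, z) (1, 0) :=
        (hasDerivAt_pr_fderiv hpz r z).deriv
    _ = fderiv ℝ (fun w : ℝ × ℝ => pr g w.1 w.2) (r, z) (0, 1) := by
        rw [pz_eq_fderiv hG, pr_eq_fderiv hG, hsecond, hsecond, hsymm]
    _ = pz (pr g) r z := (hasDerivAt_pz_fderiv hpr r z).deriv.symm

end PartialDerivatives

section WeightedSlices

variable {f f' : ℝ → ℝ → ℝ} {ea eb K : ℝ}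

theorem setLIntegral_Ioi_prod_two_mul_abs_le (hea : -1 ≤ ea) (heb : -1 ≤ eb)
    (h : ∫⁻ w in Ioi 0 ×ˢ univ,
      ofReal ((w.1 ^ ea * f w.1 w.2 ^ 2 + w.1 ^ eb * f' w.1 w.2 ^ 2) * w.1) ≤ ofReal K)
    {r : ℝ} (hr : 0 < r) :
    ∫⁻ w in Ioi r ×ˢ univ, ofReal (2 * |f w.1 w.2| * |f' w.1 w.2|)
      ≤ ofReal (K * r ^ (-(ea + eb) / 2 - 1)) := by
  have hα : r ^ (-(ea + eb) / 2 - 1) * r ^ ((ea + eb) / 2 + 1) = 1 := by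
    rw [← Real.rpow_add hr, show -(ea + eb) / 2 - 1 + ((ea + eb) / 2 + 1) = 0 by ring,
      Real.rpow_zero]
  calc ∫⁻ w in Ioi r ×ˢ univ, ofReal (2 * |f w.1 w.2| * |f' w.1 w.2|)
      ≤ ∫⁻ w in Ioi r ×ˢ univ, ofReal (r ^ (-(ea + eb) / 2 - 1)) *
          ofReal ((w.1 ^ ea * f w.1 w.2 ^ 2 + w.1 ^ eb * f' w.1 w.2 ^ 2) * w.1) := by
        refine setLIntegral_mono' (measurableSet_Ioi.prod .univ) fun w hw => ?_
        have hs : r < w.1 := hw.1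
        have hs0 : 0 < w.1 := hr.trans hs
        rw [← ENNReal.ofReal_mul (by positivity)]
        refine ENNReal.ofReal_le_ofReal ?_
        have := two_mul_mul_abs_mul_abs_le (by positivity) (by positivity)
          (rpow_sq_le_mul_rpow_mul hr hs.le hea heb) (f w.1 w.2) (f' w.1 w.2)
        calc 2 * |f w.1 w.2| * |f' w.1 w.2|
            = r ^ (-(ea + eb) / 2 - 1)
                * (2 * r ^ ((ea + eb) / 2 + 1) * |f w.1 w.2| * |f' w.1 w.2|) := by
              linear_combination (2 * |f w.1 w.2| * |f' w.1 w.2|) * hα.symm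
          _ ≤ _ := mul_le_mul_of_nonneg_left (this.trans_eq (by ring)) (by positivity)
    _ = ofReal (r ^ (-(ea + eb) / 2 - 1)) * ∫⁻ w in Ioi r ×ˢ univ,
          ofReal ((w.1 ^ ea * f w.1 w.2 ^ 2 + w.1 ^ eb * f' w.1 w.2 ^ 2) * w.1) :=
        lintegral_const_mul' _ _ ofReal_ne_top
    _ ≤ ofReal (r ^ (-(ea + eb) / 2 - 1)) * ofReal K := by
        gcongr
        exact (lintegral_mono_set (prod_mono (Ioi_subset_Ioi hr.le) subset_rfl)).trans h
    _ = ofReal (K * r ^ (-(ea + eb) / 2 - 1)) := by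
        rw [← ENNReal.ofReal_mul (by positivity), mul_comm]

theorem setLIntegral_Ioi_lintegral_sq_le (hf : Measurable fun w : ℝ × ℝ => f w.1 w.2)
    (hea : -1 ≤ ea)
    (h : ∫⁻ w in Ioi 0 ×ˢ univ,
      ofReal ((w.1 ^ ea * f w.1 w.2 ^ 2 + w.1 ^ eb * f' w.1 w.2 ^ 2) * w.1) ≤ ofReal K)
    {T : ℝ} (hT : 1 ≤ T) :
    ∫⁻ s in Ioi T, ∫⁻ z, ofReal (f s z ^ 2) ≤ ofReal K := by
  have htonelli : ∫⁻ s in Ioi T, ∫⁻ z, ofReal (f s z ^ 2)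
      = ∫⁻ w in Ioi T ×ˢ univ, ofReal (f w.1 w.2 ^ 2) := by
    rw [Measure.volume_eq_prod, setLIntegral_prod _ (by fun_prop), Measure.restrict_univ]
  rw [htonelli]
  refine le_trans ?_
    ((lintegral_mono_set (prod_mono (Ioi_subset_Ioi (by linarith)) subset_rfl)).trans h)
  refine setLIntegral_mono' (measurableSet_Ioi.prod .univ) fun w hw => ENNReal.ofReal_le_ofReal ?_
  have hs : 1 ≤ w.1 := hT.trans (le_of_lt hw.1)
  have hweight : 1 ≤ w.1 ^ ea * w.1 := by
    rw [← Real.rpow_add_one (by positivity)]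
    exact Real.one_le_rpow hs (by linarith)
  have h1 : f w.1 w.2 ^ 2 ≤ w.1 ^ ea * w.1 * f w.1 w.2 ^ 2 :=
    le_mul_of_one_le_left (sq_nonneg _) hweight
  have h2 : 0 ≤ w.1 ^ eb * f' w.1 w.2 ^ 2 * w.1 := by positivity
  linarith

end WeightedSlices

section RadialDecay

variable {g : ℝ → ℝ → ℝ}

theorem lintegral_slice_le_add (hg : ContDiff ℝ 1 (fun w : ℝ × ℝ => g w.1 w.2)) {r b : ℝ}
    (hrb : r ≤ b) :
    ∫⁻ z, ofReal (g r z ^ 2) ≤ (∫⁻ z, ofReal (g b z ^ 2))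
      + ∫⁻ w in Ioc r b ×ˢ univ, ofReal (2 * |g w.1 w.2| * |pr g w.1 w.2|) := by
  have hcont := hg.continuous
  have hcont' : Continuous fun w : ℝ × ℝ => pr g w.1 w.2 :=
    (contDiff_pr (n := 0) (by simpa using hg)).continuous
  rw [Measure.volume_eq_prod, setLIntegral_prod _ (by fun_prop), Measure.restrict_univ,
    lintegral_lintegral_swap (by fun_prop), ← lintegral_add_left (by fun_prop)]
  exact lintegral_mono fun z => sq_le_sq_add_lintegral
    (fun t => hasDerivAt_pr (hg.differentiable one_ne_zero) t z)
    (by exact hcont'.comp (continuous_id.prodMk continuous_const)) hrb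

theorem lintegral_slice_sq_le (hg : ContDiff ℝ 1 (fun w : ℝ × ℝ => g w.1 w.2)) {ea eb K : ℝ}
    (hea : -1 ≤ ea) (heb : -1 ≤ eb)
    (h : ∫⁻ w in Ioi 0 ×ˢ univ,
      ofReal ((w.1 ^ ea * g w.1 w.2 ^ 2 + w.1 ^ eb * pr g w.1 w.2 ^ 2) * w.1) ≤ ofReal K)
    {r : ℝ} (hr : 0 < r) :
    ∫⁻ z, ofReal (g r z ^ 2) ≤ ofReal (K * r ^ (-(ea + eb) / 2 - 1)) := by
  refine ENNReal.le_of_forall_pos_le_add fun ε hε _ => ?_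
  obtain ⟨b, hb, hgb⟩ := exists_gt_le_of_setLIntegral_Ioi_ne_top
    (ne_top_of_le_ne_top ofReal_ne_top
      (setLIntegral_Ioi_lintegral_sq_le hg.continuous.measurable hea h (le_max_right r 1)))
    (ENNReal.coe_ne_zero.2 hε.ne')
  calc ∫⁻ z, ofReal (g r z ^ 2)
      ≤ (∫⁻ z, ofReal (g b z ^ 2))
        + ∫⁻ w in Ioc r b ×ˢ univ, ofReal (2 * |g w.1 w.2| * |pr g w.1 w.2|) :=
        lintegral_slice_le_add hg ((le_max_left r 1).trans hb.le)
    _ ≤ ε + ofReal (K * r ^ (-(ea + eb) / 2 - 1)) :=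
        add_le_add hgb ((lintegral_mono_set (prod_mono Ioc_subset_Ioi_self subset_rfl)).trans
          (setLIntegral_Ioi_prod_two_mul_abs_le hea heb h hr))
    _ = _ := add_comm _ _

end RadialDecay

/-- if a smooth axially symmetric function `f(r,z)` satisfies
`∫ (r^{e₁}|f|² + r^{e₂}|∇f|² + r^{e₃}|∂_z∇f|²) dx ≤ C`, then with a constant `C'`
depending only on `C, e₁, e₂, e₃` one has, for every `r > 0`:
`∫ |f(r,z)|² dz ≤ C' r^{-(e₁+e₂)/2 - 1}`, `∫ |∂_z f(r,z)|² dz ≤ C' r^{-(e₃+e₂)/2 - 1}`,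
and `|f(r,z)|² ≤ C' r^{-(e₁+2e₂+e₃)/4 - 1}` for all `z`. -/
theorem stmt_14 (e1 e2 e3 C : ℝ)
    (he1 : 0 ≤ e1) (he2 : 0 ≤ e2) (he3 : 0 ≤ e3) (hC : 0 < C) :
    ∃ C' : ℝ, 0 < C' ∧ ∀ q : ℝ → ℝ → ℝ,
      ContDiff ℝ (⊤ : ℕ∞) (fun w : ℝ × ℝ => q w.1 w.2) →
      (∫⁻ w in Set.Ioi (0:ℝ) ×ˢ (Set.univ : Set ℝ),
        ENNReal.ofReal ((w.1 ^ e1 * q w.1 w.2 ^ 2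
          + w.1 ^ e2 * ((pr q w.1 w.2) ^ 2 + (pz q w.1 w.2) ^ 2)
          + w.1 ^ e3 * ((pz (pr q) w.1 w.2) ^ 2 + (pz (pz q) w.1 w.2) ^ 2))
          * (2 * π * w.1))) ≤ ENNReal.ofReal C →
      ∀ r : ℝ, 0 < r →
        ((∫⁻ z : ℝ, ENNReal.ofReal (q r z ^ 2))
            ≤ ENNReal.ofReal (C' * r ^ (-(e1 + e2)/2 - 1))) ∧
        ((∫⁻ z : ℝ, ENNReal.ofReal ((pz q r z) ^ 2))
            ≤ ENNReal.ofReal (C' * r ^ (-(e3 + e2)/2 - 1))) ∧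
        (∀ z : ℝ, q r z ^ 2 ≤ C' * r ^ (-(e1 + 2*e2 + e3)/4 - 1)) := by
  refine ⟨C / π, by positivity, fun q hq H r hr => ?_⟩
  have hq2 : ContDiff ℝ 2 (fun w : ℝ × ℝ => q w.1 w.2) :=
    hq.of_le (WithTop.coe_le_coe.2 le_top)
  have hqz : ContDiff ℝ 1 (fun w : ℝ × ℝ => pz q w.1 w.2) := contDiff_pz hq2
  have hq_energy : ∫⁻ w in Ioi 0 ×ˢ univ,
      ofReal ((w.1 ^ e1 * q w.1 w.2 ^ 2 + w.1 ^ e2 * pr q w.1 w.2 ^ 2) * w.1)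
        ≤ ofReal (C / (2 * π)) := by
    refine setLIntegral_ofReal_mul_le_div (measurableSet_Ioi.prod .univ) two_pi_pos
      (fun w hw => hw.1.le) (fun w hw => ?_) H
    have : (0 : ℝ) < w.1 := hw.1
    have : 0 ≤ w.1 ^ e2 * pz q w.1 w.2 ^ 2
      + w.1 ^ e3 * (pz (pr q) w.1 w.2 ^ 2 + pz (pz q) w.1 w.2 ^ 2) := by positivity
    linarith
  have hqz_energy : ∫⁻ w in Ioi 0 ×ˢ univ,
      ofReal ((w.1 ^ e2 * pz q w.1 w.2 ^ 2 + w.1 ^ e3 * pr (pz q) w.1 w.2 ^ 2) * w.1)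
        ≤ ofReal (C / (2 * π)) := by
    rw [pr_pz_eq_pz_pr hq2]
    refine setLIntegral_ofReal_mul_le_div (measurableSet_Ioi.prod .univ) two_pi_pos
      (fun w hw => hw.1.le) (fun w hw => ?_) H
    have : (0 : ℝ) < w.1 := hw.1
    have : 0 ≤ w.1 ^ e1 * q w.1 w.2 ^ 2 + w.1 ^ e2 * pr q w.1 w.2 ^ 2
      + w.1 ^ e3 * pz (pz q) w.1 w.2 ^ 2 := by positivity
    linarith
  have hi := lintegral_slice_sq_le (hq2.of_le one_le_two) (by linarith) (by linarith)
    hq_energy hr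
  have hii := lintegral_slice_sq_le hqz (by linarith) (by linarith) hqz_energy hr
  have hK : C / (2 * π) ≤ C / π := by gcongr; linarith [pi_pos]
  refine ⟨hi.trans (ENNReal.ofReal_le_ofReal (by gcongr)),
    hii.trans (ENNReal.ofReal_le_ofReal (by rw [add_comm e3]; gcongr)), fun z => ?_⟩
  refine (sq_le_two_sqrt_mul_of_lintegral_sq_le (hasDerivAt_pz (hq2.differentiable two_ne_zero) r)
    (by exact hqz.continuous.comp (continuous_const.prodMk continuous_id))
    (by positivity) (by positivity) hi hii z).trans_eq ?_
  rw [sqrt_mul_rpow_mul_mul_rpow (by positivity) hr]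
  ring_nf
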